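/- arXiv:1912.00326 — 2 statements merged into one kernel-verified Lean document; each statement's English description precedes it below -/
import Mathlib

section
/- Let f₁ : ℝ^d → ℝ be convex and differentiable, f₂ : ℝ^d → ℝ convex, f = f₁ + f₂, and L > 0. Fix y ∈ ℝ^d and let x* = argmin_x ⟨∇f₁(y), x − y⟩ + (L/2)‖x − y‖² + f₂(x). If f₁(x*) ≤ f₁(y) + ⟨∇f₁(y), x* − y⟩ + (L/2)‖x* − y‖², then for every x ∈ ℝ^d, f(x) − f(x*) ≥ (L/2)‖x* − y‖² + L⟨y − x, x* − y⟩. -/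
/-!
Convexity of `f₁` gives the gradient inequality `f₁ x ≥ f₁ y + ⟪g, x - y⟫`. Minimality of `x*`
for the convex prox model, tested against the points `x* + t (x - x*)` with `t → 0⁺`, gives the
subgradient inequality `f₂ x ≥ f₂ x* - ⟪g + L (x* - y), x - x*⟫`. Adding both to the descent
hypothesis, the terms in `g` cancel.
-/

open scoped RealInnerProductSpace
open Set Filter Topology

theorem ConvexOn.add_apply_sub_le_of_hasFDerivAt {E : Type*} [NormedAddCommGroup E]
    [NormedSpace ℝ E] {f : E → ℝ} {f' : E →L[ℝ] ℝ} {y : E} (hf : ConvexOn ℝ univ f)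
    (hf' : HasFDerivAt f f' y) (x : E) : f y + f' (x - y) ≤ f x := by
  have hline : ConvexOn ℝ univ (f ∘ (AffineMap.lineMap y x : ℝ →ᵃ[ℝ] E)) := by
    simpa using hf.comp_affineMap (AffineMap.lineMap y x)
  have hderiv : HasDerivAt (f ∘ (AffineMap.lineMap y x : ℝ →ᵃ[ℝ] E)) (f' (x - y)) 0 := by
    refine HasFDerivAt.comp_hasDerivAt (0 : ℝ) ?_ AffineMap.hasDerivAt_lineMap
    simpa using hf'
  have := hline.le_slope_of_hasDerivAt (mem_univ 0) (mem_univ 1) one_pos hderiv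
  simp only [slope_def_field, Function.comp_apply, AffineMap.lineMap_apply_zero,
    AffineMap.lineMap_apply_one, sub_zero, div_one] at this
  linarith

theorem ConvexOn.add_inner_sub_le_of_hasGradientAt {E : Type*} [NormedAddCommGroup E]
    [InnerProductSpace ℝ E] [CompleteSpace E] {f : E → ℝ} {g y : E} (hf : ConvexOn ℝ univ f)
    (hg : HasGradientAt f g y) (x : E) : f y + ⟪g, x - y⟫ ≤ f x :=
  hf.add_apply_sub_le_of_hasFDerivAt (hasGradientAt_iff_hasFDerivAt.mp hg) x

theorem nonneg_of_forall_mem_Ioc_add_mul_nonneg {a b : ℝ}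
    (h : ∀ t ∈ Ioc (0 : ℝ) 1, 0 ≤ a + t * b) : 0 ≤ a := by
  have hlim : Tendsto (fun t : ℝ => a + t * b) (𝓝[>] 0) (𝓝 a) :=
    tendsto_nhdsWithin_of_tendsto_nhds <| by
      simpa using ((continuous_mul_const b).const_add a).tendsto 0
  exact ge_of_tendsto hlim (eventually_of_mem (Ioc_mem_nhdsGT one_pos) h)

theorem ConvexOn.sub_le_inner_of_forall_prox_le {E : Type*} [NormedAddCommGroup E]
    [InnerProductSpace ℝ E] {h : E → ℝ} (hh : ConvexOn ℝ univ h) {g y xstar : E} {L : ℝ}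
    (hmin : ∀ x, ⟪g, xstar - y⟫ + (L / 2) * ‖xstar - y‖ ^ 2 + h xstar ≤
      ⟪g, x - y⟫ + (L / 2) * ‖x - y‖ ^ 2 + h x) (x : E) :
    h xstar - h x ≤ ⟪g + L • (xstar - y), x - xstar⟫ := by
  set v := xstar - y
  set w := x - xstar
  suffices ∀ t ∈ Ioc (0 : ℝ) 1, 0 ≤ (⟪g + L • v, w⟫ + (h x - h xstar)) + t * (L / 2 * ‖w‖ ^ 2) by
    linarith [nonneg_of_forall_mem_Ioc_add_mul_nonneg this]
  rintro t ⟨ht₀, ht₁⟩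
  have hmodel : ⟪g, v + t • w⟫ + L / 2 * ‖v + t • w‖ ^ 2 =
      ⟪g, v⟫ + L / 2 * ‖v‖ ^ 2 + t * ⟪g + L • v, w⟫ + t ^ 2 * (L / 2 * ‖w‖ ^ 2) := by
    rw [norm_add_sq_real, inner_add_right, inner_add_left, real_inner_smul_right,
      real_inner_smul_right, real_inner_smul_left, norm_smul, mul_pow, Real.norm_eq_abs, sq_abs]
    ring
  have hconv : h (xstar + t • w) ≤ h xstar + t * (h x - h xstar) := by
    have hseg : (1 - t) • xstar + t • x = xstar + t • w := by module
    have := hh.2 (mem_univ xstar) (mem_univ x) (sub_nonneg.mpr ht₁) ht₀.le (sub_add_cancel 1 t)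
    rw [hseg, smul_eq_mul, smul_eq_mul] at this
    linarith
  have hstep := hmin (xstar + t • w)
  rw [show xstar + t • w - y = v + t • w by module, hmodel] at hstep
  have : 0 ≤ t * ((⟪g + L • v, w⟫ + (h x - h xstar)) + t * (L / 2 * ‖w‖ ^ 2)) := by
    linear_combination hstep + hconv
  exact nonneg_of_mul_nonneg_right this ht₀

theorem sufficient_decrease_lemma_general (d : ℕ)
    (f₁ f₂ : EuclideanSpace ℝ (Fin d) → ℝ)
    (hf₁ : ConvexOn ℝ Set.univ f₁) (hf₂ : ConvexOn ℝ Set.univ f₂)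
    (L : ℝ) (y xstar : EuclideanSpace ℝ (Fin d))
    (g : EuclideanSpace ℝ (Fin d)) (hg : HasGradientAt f₁ g y)
    (hxstar : ∀ x : EuclideanSpace ℝ (Fin d),
      ⟪g, xstar - y⟫ + (L / 2) * ‖xstar - y‖ ^ 2 + f₂ xstar ≤
        ⟪g, x - y⟫ + (L / 2) * ‖x - y‖ ^ 2 + f₂ x)
    (hdesc : f₁ xstar ≤ f₁ y + ⟪g, xstar - y⟫ + (L / 2) * ‖xstar - y‖ ^ 2) :
    ∀ x : EuclideanSpace ℝ (Fin d),
      (f₁ x + f₂ x) - (f₁ xstar + f₂ xstar) ≥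
        (L / 2) * ‖xstar - y‖ ^ 2 + L * ⟪y - x, xstar - y⟫ := by
  intro x
  have hgrad := hf₁.add_inner_sub_le_of_hasGradientAt hg x
  have hprox := hf₂.sub_le_inner_of_forall_prox_le hxstar x
  have hsplit : ⟪g, x - y⟫ = ⟪g, xstar - y⟫ + ⟪g, x - xstar⟫ := by
    rw [← inner_add_right, sub_add_sub_cancel']
  have hcross : ⟪g + L • (xstar - y), x - xstar⟫ =
      ⟪g, x - xstar⟫ - L * ‖xstar - y‖ ^ 2 - L * ⟪y - x, xstar - y⟫ := by
    have : y - x = -((xstar - y) + (x - xstar)) := by abel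
    rw [this, inner_add_left, real_inner_smul_left, inner_neg_left, inner_add_left,
      real_inner_self_eq_norm_sq, real_inner_comm (xstar - y) (x - xstar)]
    ring
  linarith

/-- the sufficient-decrease lemma (Beck–Teboulle Lemma 2.3) for a
proximal gradient step with stepsize `1/L`. -/
theorem sufficient_decrease_lemma (d : ℕ)
    (f₁ f₂ : EuclideanSpace ℝ (Fin d) → ℝ)
    (hf₁ : ConvexOn ℝ Set.univ f₁) (hf₂ : ConvexOn ℝ Set.univ f₂)
    (hdiff : Differentiable ℝ f₁)
    (L : ℝ) (hL : 0 < L) (y xstar : EuclideanSpace ℝ (Fin d))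
    (g : EuclideanSpace ℝ (Fin d)) (hg : HasGradientAt f₁ g y)
    (hxstar : ∀ x : EuclideanSpace ℝ (Fin d),
      ⟪g, xstar - y⟫ + (L / 2) * ‖xstar - y‖ ^ 2 + f₂ xstar ≤
        ⟪g, x - y⟫ + (L / 2) * ‖x - y‖ ^ 2 + f₂ x)
    (hdesc : f₁ xstar ≤ f₁ y + ⟪g, xstar - y⟫ + (L / 2) * ‖xstar - y‖ ^ 2) :
    ∀ x : EuclideanSpace ℝ (Fin d),
      (f₁ x + f₂ x) - (f₁ xstar + f₂ xstar) ≥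
        (L / 2) * ‖xstar - y‖ ^ 2 + L * ⟪y - x, xstar - y⟫ :=
  sufficient_decrease_lemma_general d f₁ f₂ hf₁ hf₂ L y xstar g hg hxstar hdesc
end

section
/- Under the setting of the sufficient-decrease lemma with x = y: if x* is the proximal gradient update of y with stepsize 1/L and the descent condition f₁(x*) ≤ f₁(y) + ⟨∇f₁(y), x* − y⟩ + (L/2)‖x* − y‖² holds, then f(y) − f(x*) ≥ (L/2)‖x* − y‖². -/
open scoped RealInnerProductSpace

/-- sufficient decrease with `x = y`:
`f(y) − f(x*) ≥ (L/2)‖x* − y‖²`. -/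
theorem sufficient_decrease_at_y (d : ℕ)
    (f₁ f₂ : EuclideanSpace ℝ (Fin d) → ℝ)
    (hf₁ : ConvexOn ℝ Set.univ f₁) (hf₂ : ConvexOn ℝ Set.univ f₂)
    (hdiff : Differentiable ℝ f₁)
    (L : ℝ) (hL : 0 < L) (y xstar : EuclideanSpace ℝ (Fin d))
    (g : EuclideanSpace ℝ (Fin d)) (hg : HasGradientAt f₁ g y)
    (hxstar : ∀ x : EuclideanSpace ℝ (Fin d),
      ⟪g, xstar - y⟫ + (L / 2) * ‖xstar - y‖ ^ 2 + f₂ xstar ≤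
        ⟪g, x - y⟫ + (L / 2) * ‖x - y‖ ^ 2 + f₂ x)
    (hdesc : f₁ xstar ≤ f₁ y + ⟪g, xstar - y⟫ + (L / 2) * ‖xstar - y‖ ^ 2) :
    (f₁ y + f₂ y) - (f₁ xstar + f₂ xstar) ≥ (L / 2) * ‖xstar - y‖ ^ 2 := by
  set s : ℝ := ‖xstar - y‖ ^ 2 with hsdef
  have hs0 : 0 ≤ s := by positivity
  have key : ⟪g, xstar - y⟫ + f₂ xstar + L * s ≤ f₂ y := by
    apply le_of_forall_pos_le_add
    intro ε hε
    set t : ℝ := min 1 (ε / (L * s + 1)) with htdef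
    have hden : 0 < L * s + 1 := by positivity
    have ht0 : 0 < t := lt_min one_pos (div_pos hε hden)
    have ht1 : t ≤ 1 := min_le_left _ _
    have htε : t * (L * s + 1) ≤ ε := by
      calc t * (L * s + 1) ≤ (ε / (L * s + 1)) * (L * s + 1) := by
            exact mul_le_mul_of_nonneg_right (min_le_right _ _) hden.le
        _ = ε := by field_simp
    set xt : EuclideanSpace ℝ (Fin d) := (1 - t) • xstar + t • y with hxt
    have hxty : xt - y = (1 - t) • (xstar - y) := by
      rw [hxt]; module
    have hinner : ⟪g, xt - y⟫ = (1 - t) * ⟪g, xstar - y⟫ := by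
      rw [hxty, real_inner_smul_right]
    have hnorm : ‖xt - y‖ ^ 2 = (1 - t) ^ 2 * s := by
      rw [hxty, norm_smul, mul_pow, hsdef, Real.norm_eq_abs, sq_abs]
    have hconv : f₂ xt ≤ (1 - t) * f₂ xstar + t * f₂ y :=
      hf₂.2 (Set.mem_univ xstar) (Set.mem_univ y) (by linarith) ht0.le (by ring)
    have h1 := hxstar xt
    rw [hinner, hnorm] at h1
    nlinarith [mul_pos ht0 hL, sq_nonneg t, mul_nonneg ht0.le hs0,
      mul_nonneg (mul_nonneg ht0.le hL.le) hs0]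
  linarith [hdesc, key]
end
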